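/- arXiv:1908.07382 — 2 statements merged into one kernel-verified Lean document; each statement's English description precedes it below -/
import Mathlib

section
/- For a continuous action of a finitely generated free group or monoid G on a compact metric space X, and any x ∈ X and infinite (reduced) word w, the set ω_{F_w}(x) = ⋂_{n∈ℕ} cl{f_u(x) : u|_n = w|_n} is invariant under every f_s for s a generator (or generator inverse). -/
/-! Right multiplication by a letter `s` turns a reduced word agreeing with `w` on its first
`n + 1` letters into one agreeing with `w` on its first `n` letters: either `s` cancels the last
letter, or it is appended. Hence `f s` maps the level-`(n + 1)` orbit set into the level-`n` one,
by continuity also their closures, and intersecting over `n` gives the invariance. -/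

/-- Reduced words over the alphabet `S` of generators and inverses (`ι` = formal inverse). -/
def Reduced {S : Type*} (ι : S → S) (l : List S) : Prop :=
  l.Chain' (fun a b => b ≠ ι a)

/-- The action of a word `l` on `x`: `f_{uv} = f_v ∘ f_u`. -/
def act {S X : Type*} (f : S → X → X) (l : List S) (x : X) : X :=
  l.foldl (fun y s => f s y) x

/-- `ω_{F_w}(x) = ⋂ₙ cl { f_u(x) : u|ₙ = w|ₙ }`, the intersection over `n` of the closures
of the images of `x` under reduced words agreeing with `w` on their first `n` letters. -/
def omegaFW {S X : Type*} [MetricSpace X] (ι : S → S) (f : S → X → X)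
    (w : ℕ → S) (x : X) : Set X :=
  ⋂ n : ℕ, closure {y | ∃ l : List S, Reduced ι l ∧ (∀ k < n, l[k]? = some (w k)) ∧
    y = act f l x}

theorem act_append_singleton {S X : Type*} (f : S → X → X) (l : List S) (s : S) (x : X) :
    act f (l ++ [s]) x = f s (act f l x) := by
  simp [act]

theorem Reduced.append_singleton {S : Type*} {ι : S → S} {l : List S} {s : S}
    (hl : Reduced ι l) (hs : ∀ a ∈ l.getLast?, s ≠ ι a) : Reduced ι (l ++ [s]) :=
  List.isChain_append.mpr ⟨hl, List.isChain_singleton s, fun a ha b hb => by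
    obtain rfl : b = s := by simpa using hb.symm
    exact hs a ha⟩

theorem Reduced.exists_act_eq {S X : Type*} {ι : S → S} (hι : ∀ s, ι (ι s) = s)
    {f : S → X → X} (hinv : ∀ s y, f (ι s) (f s y) = y) {l : List S} (hl : Reduced ι l)
    (s : S) (x : X) :
    ∃ l', Reduced ι l' ∧ l.dropLast <+: l' ∧ act f l' x = f s (act f l x) := by
  by_cases hlast : ι s ∈ l.getLast?
  · refine ⟨l.dropLast, hl.prefix l.dropLast_prefix, List.prefix_refl _, ?_⟩
    conv_rhs => rw [← List.dropLast_append_getLast? _ hlast, act_append_singleton]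
    simpa [hι] using (hinv (ι s) (act f l.dropLast x)).symm
  · refine ⟨l ++ [s], hl.append_singleton ?_, l.dropLast_prefix.trans (l.prefix_append _),
      act_append_singleton f l s x⟩
    rintro a ha rfl
    exact hlast (by rwa [hι])

theorem List.getElem?_dropLast_of_succ_lt {α : Type*} {l : List α} {k : ℕ}
    (hk : k + 1 < l.length) : l.dropLast[k]? = l[k]? := by
  rw [List.getElem?_dropLast, if_pos (by omega)]

theorem List.IsPrefix.getElem?_eq_some {α : Type*} {l₁ l₂ : List α} (h : l₁ <+: l₂) {k : ℕ}
    {a : α} (hk : l₁[k]? = some a) : l₂[k]? = some a := by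
  obtain ⟨t, rfl⟩ := h
  rw [List.getElem?_append_left (List.getElem?_eq_some_iff.mp hk).1, hk]

def cylinderOrbit {S X : Type*} (ι : S → S) (f : S → X → X) (w : ℕ → S) (x : X) (n : ℕ) :
    Set X :=
  {y | ∃ l : List S, Reduced ι l ∧ (∀ k < n, l[k]? = some (w k)) ∧ y = act f l x}

theorem omegaFW_eq_iInter_closure {S X : Type*} [MetricSpace X] (ι : S → S) (f : S → X → X)
    (w : ℕ → S) (x : X) : omegaFW ι f w x = ⋂ n, closure (cylinderOrbit ι f w x n) :=
  rfl

theorem mapsTo_cylinderOrbit_succ {S X : Type*} {ι : S → S} (hι : ∀ s, ι (ι s) = s)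
    {f : S → X → X} (hinv : ∀ s y, f (ι s) (f s y) = y) (w : ℕ → S) (x : X) (n : ℕ) (s : S) :
    Set.MapsTo (f s) (cylinderOrbit ι f w x (n + 1)) (cylinderOrbit ι f w x n) := by
  rintro _ ⟨l, hl, hagree, rfl⟩
  obtain ⟨l', hl', hpre, hact⟩ := hl.exists_act_eq hι hinv s x
  have hlen : n < l.length := (List.getElem?_eq_some_iff.mp (hagree n n.lt_succ_self)).1
  refine ⟨l', hl', fun k hk => hpre.getElem?_eq_some ?_, hact.symm⟩
  rw [List.getElem?_dropLast_of_succ_lt (by omega)]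
  exact hagree k (by omega)

theorem omegaFW_invariant_general {S X : Type*} [MetricSpace X] (ι : S → S) (hι : ∀ s, ι (ι s) = s)
    (f : S → X → X) (hcont : ∀ s, Continuous (f s))
    (hinv : ∀ s y, f (ι s) (f s y) = y)
    (w : ℕ → S) (x : X) :
    ∀ y ∈ omegaFW ι f w x, ∀ s : S, f s y ∈ omegaFW ι f w x := by
  intro y hy s
  rw [omegaFW_eq_iInter_closure, Set.mem_iInter] at hy ⊢
  exact fun n => (mapsTo_cylinderOrbit_succ hι hinv w x n s).closure (hcont s) (hy (n + 1))

/-- `ω_{F_w}(x)` is invariant under every `f_s`. -/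
theorem omegaFW_invariant {S X : Type*} [Fintype S]
    [MetricSpace X] [CompactSpace X]
    (ι : S → S) (hι : ∀ s, ι (ι s) = s) (hιne : ∀ s, ι s ≠ s)
    (f : S → X → X) (hcont : ∀ s, Continuous (f s))
    (hinv : ∀ s y, f (ι s) (f s y) = y)
    (w : ℕ → S) (hw : ∀ n, w (n + 1) ≠ ι (w n)) (x : X) :
    ∀ y ∈ omegaFW ι f w x, ∀ s : S, f s y ∈ omegaFW ι f w x :=
  omegaFW_invariant_general ι hι f hcont hinv w x
end

section
/- If a shift space X over a finitely generated free group or monoid G is not a shift of finite type, then for every n ∈ ℕ there exists m > n and a forbidden m-block of X all of whose proper sub-blocks are not forbidden (i.e., each occurs in some element of X). -/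
/-- Left multiplication of a reduced word by a letter, with cancellation. -/
def consRed {S : Type*} [DecidableEq S] (ι : S → S) (i : S) : List S → List S
  | [] => [i]
  | a :: t => if a = ι i then t else i :: a :: t

theorem reduced_consRed {S : Type*} [DecidableEq S] (ι : S → S) (i : S) {l : List S}
    (h : Reduced ι l) : Reduced ι (consRed ι i l) := by
  cases l with
  | nil => simp [consRed, Reduced, List.Chain']
  | cons a t =>
    have h' : List.Chain' (fun a b => b ≠ ι a) (a :: t) := h
    by_cases hc : a = ι i
    · simpa [consRed, hc, Reduced, List.Chain'] using h'.tail
    · simp only [consRed, if_neg hc]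
      exact List.isChain_cons_cons.mpr ⟨hc, h'⟩

/-- Multiplication of reduced words: multiply the letters of `v` onto `u` from the right. -/
def mulRed {S : Type*} [DecidableEq S] (ι : S → S) (v u : List S) : List S :=
  v.foldr (consRed ι) u

theorem reduced_mulRed {S : Type*} [DecidableEq S] (ι : S → S) (v : List S) {u : List S}
    (h : Reduced ι u) : Reduced ι (mulRed ι v u) := by
  induction v with
  | nil => exact h
  | cons a t ih => exact reduced_consRed ι a ih

/-- The reduced words of the free group with inverse map `ι` on the alphabet `S`. -/
abbrev Word {S : Type*} (ι : S → S) := {l : List S // Reduced ι l}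

/-- The length of a reduced word. -/
def wlen {S : Type*} {ι : S → S} (u : Word ι) : ℕ := u.1.length

/-- The empty word (identity element). -/
def emptyWord {S : Type*} (ι : S → S) : Word ι := ⟨[], List.isChain_nil⟩

/-- A single-letter word. -/
def word1 {S : Type*} (ι : S → S) (i : S) : Word ι := ⟨[i], List.isChain_singleton i⟩

/-- The group product `v · u` as a reduced word. -/
def wmul {S : Type*} [DecidableEq S] {ι : S → S} (v : List S) (u : Word ι) : Word ι :=
  ⟨mulRed ι v u.1, reduced_mulRed ι v u.2⟩

/-- The product of two reduced words. -/
def wordMul {S : Type*} [DecidableEq S] {ι : S → S} (u v : Word ι) : Word ι :=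
  wmul u.1 v

/-- The shift `σ_v`: `σ_v(x)(u) = x(vu)`. -/
def shiftBy {S A : Type*} [DecidableEq S] {ι : S → S} (v : List S) (x : Word ι → A) :
    Word ι → A :=
  fun u => x (wmul v u)

/-- The metric on `𝒜^G`: `d(x,y) = inf({2^{-n} : x, y agree on all words of length < n})`. -/
noncomputable def shiftDist {S A : Type*} {ι : S → S} (x y : Word ι → A) : ℝ :=
  sInf {r | ∃ n : ℕ, (∀ u : Word ι, wlen u < n → x u = y u) ∧ r = (2 : ℝ) ^ (-(n : ℤ))}

/-- `B` (viewed as an `m`-block, i.e. only through its values on words of length `< m`)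
occurs in `x`. -/
def occursIn {S A : Type*} [DecidableEq S] {ι : S → S} (x : Word ι → A) (m : ℕ)
    (B : Word ι → A) : Prop :=
  ∃ u : Word ι, ∀ v : Word ι, wlen v < m → shiftBy u.1 x v = B v

/-- The shift space determined by a set `𝓕` of forbidden blocks (an element `(m, B)`
represents the `m`-block obtained by restricting `B` to words of length `< m`). -/
def shiftOf {S A : Type*} [DecidableEq S] (ι : S → S) (𝓕 : Set (ℕ × (Word ι → A))) :
    Set (Word ι → A) :=
  {x | ∀ p ∈ 𝓕, ¬ occursIn x p.1 p.2}

/-- A shift space: a subset of the full shift cut out by a set of forbidden blocks. -/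
def IsShiftSpace {S A : Type*} [DecidableEq S] (ι : S → S) (X : Set (Word ι → A)) : Prop :=
  ∃ 𝓕 : Set (ℕ × (Word ι → A)), X = shiftOf ι 𝓕

/-- A shift of finite type: cut out by finitely many forbidden blocks. -/
def IsSFT {S A : Type*} [DecidableEq S] (ι : S → S) (X : Set (Word ι → A)) : Prop :=
  ∃ 𝓕 : Set (ℕ × (Word ι → A)), 𝓕.Finite ∧ X = shiftOf ι 𝓕

/-! If for some `n` every forbidden block larger than `n` has a forbidden proper sub-block,
then descending through sub-blocks, every forbidden block occurring in a configuration `x`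
yields a forbidden block of size at most `n` occurring in `x`. So `X` is cut out by its
forbidden blocks of size at most `n`; viewed as blocks, i.e. through their values on the
finitely many words of length `< n`, there are only finitely many of them, and `X` is of
finite type. -/

section Words

variable {S : Type*} [DecidableEq S] (ι : S → S)

theorem length_consRed_le (i : S) (l : List S) : (consRed ι i l).length ≤ l.length + 1 := by
  cases l with
  | nil => simp [consRed]
  | cons a t => by_cases hc : a = ι i <;> simp [consRed, hc]; omega

theorem length_mulRed_le (v u : List S) : (mulRed ι v u).length ≤ v.length + u.length := by
  induction v with
  | nil => simp [mulRed]
  | cons a t ih =>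
    have := length_consRed_le ι a (mulRed ι t u)
    simp only [mulRed, List.foldr_cons, List.length_cons] at this ih ⊢
    omega

variable {ι}

theorem consRed_consRed_inv (hι : ∀ s, ι (ι s) = s) (i : S) {z : List S} (hz : Reduced ι z) :
    consRed ι i (consRed ι (ι i) z) = z := by
  cases z with
  | nil => simp [consRed]
  | cons b s =>
    by_cases hb : b = i
    · subst hb
      cases s with
      | nil => simp [consRed, hι]
      | cons c s' =>
        have hc : c ≠ ι b := (List.isChain_cons_cons.mp hz).1
        simp [consRed, hι, hc]
    · simp [consRed, hι, hb]

theorem mulRed_consRed (hι : ∀ s, ι (ι s) = s) (i : S) (l : List S) {v : List S}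
    (hv : Reduced ι v) :
    mulRed ι (consRed ι i l) v = consRed ι i (mulRed ι l v) := by
  cases l with
  | nil => rfl
  | cons a t =>
    by_cases hc : a = ι i
    · simp only [consRed, mulRed, List.foldr_cons, hc]
      exact (consRed_consRed_inv hι i (reduced_mulRed ι t hv)).symm
    · simp only [consRed, if_neg hc]
      rfl

theorem mulRed_assoc (hι : ∀ s, ι (ι s) = s) (w u : List S) {v : List S} (hv : Reduced ι v) :
    mulRed ι (mulRed ι w u) v = mulRed ι w (mulRed ι u v) := by
  induction w with
  | nil => rfl
  | cons a t ih =>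
    change mulRed ι (consRed ι a (mulRed ι t u)) v = consRed ι a (mulRed ι t (mulRed ι u v))
    rw [mulRed_consRed hι a _ hv, ih]

theorem wmul_wmul (hι : ∀ s, ι (ι s) = s) (w : List S) (u v : Word ι) :
    wmul w (wmul u.1 v) = wmul (mulRed ι w u.1) v :=
  Subtype.ext (mulRed_assoc hι w u.1 v.2).symm

end Words

theorem finite_wlen_lt {S : Type*} [Finite S] (ι : S → S) (n : ℕ) :
    {v : Word ι | wlen v < n}.Finite :=
  (List.finite_length_lt S n).preimage Subtype.val_injective.injOn

theorem finite_setOf_eq_of_le_wlen {S A : Type*} [Finite S] [Finite A] (ι : S → S) (a₀ : A)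
    (n : ℕ) :
    {B : Word ι → A | ∀ v, n ≤ wlen v → B v = a₀}.Finite := by
  have := (finite_wlen_lt ι n).to_subtype
  refine (Set.finite_range fun f : {v : Word ι | wlen v < n} → A =>
    fun v => if h : wlen v < n then f ⟨v, h⟩ else a₀).subset fun B hB => ?_
  refine ⟨fun v => B v.1, funext fun v => ?_⟩
  by_cases h : wlen v < n
  · simp [h]
  · simp [h, hB v (not_lt.mp h)]

section Blocks

variable {S A : Type*} [DecidableEq S] {ι : S → S}

theorem occursIn_congr {x B B' : Word ι → A} {m : ℕ}
    (h : ∀ v : Word ι, wlen v < m → B v = B' v) : occursIn x m B ↔ occursIn x m B' :=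
  exists_congr fun _ => forall_congr' fun v => imp_congr_right fun hv => by rw [h v hv]

/-- The sub-block of an `m`-block `B` at position `u` of size `k` is `shiftBy u B`, read as
a `k`-block. -/
theorem occursIn.shiftBy (hι : ∀ s, ι (ι s) = s) {x B : Word ι → A} {m k : ℕ} (u : Word ι)
    (hk : wlen u + k ≤ m) (hx : occursIn x m B) : occursIn x k (shiftBy u.1 B) := by
  obtain ⟨w, hw⟩ := hx
  refine ⟨wmul w.1 u, fun v hv => ?_⟩
  have hlen : wlen (wmul u.1 v) < m := by
    have := length_mulRed_le ι u.1 v.1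
    simp only [wlen, wmul] at hv hk ⊢
    omega
  change x (wmul (wmul w.1 u).1 v) = B (wmul u.1 v)
  rw [← hw _ hlen]
  exact congrArg x (wmul_wmul hι w.1 u v).symm

def truncate (a₀ : A) (m : ℕ) (B : Word ι → A) : Word ι → A :=
  fun v => if wlen v < m then B v else a₀

theorem occursIn_truncate (a₀ : A) (x B : Word ι → A) (m : ℕ) :
    occursIn x m (truncate a₀ m B) ↔ occursIn x m B :=
  occursIn_congr fun _ hv => if_pos hv

theorem shiftOf_image_truncate (a₀ : A) (𝓕 : Set (ℕ × (Word ι → A))) :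
    shiftOf ι ((fun p => (p.1, truncate a₀ p.1 p.2)) '' 𝓕) = shiftOf ι 𝓕 := by
  ext x
  simp only [shiftOf, Set.mem_ofPred_eq, Set.forall_mem_image, occursIn_truncate]

theorem isSFT_shiftOf_of_le [Finite S] [Finite A] {𝓕 : Set (ℕ × (Word ι → A))} {n : ℕ}
    (h𝓕 : ∀ p ∈ 𝓕, p.1 ≤ n) : IsSFT ι (shiftOf ι 𝓕) := by
  cases isEmpty_or_nonempty A with
  | inl hA =>
    have : IsEmpty (Word ι → A) := ⟨fun f => hA.false (f (emptyWord ι))⟩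
    exact ⟨∅, Set.finite_empty, Subsingleton.elim _ _⟩
  | inr hA =>
    obtain ⟨a₀⟩ := hA
    refine ⟨_, ?_, (shiftOf_image_truncate a₀ 𝓕).symm⟩
    refine ((Set.finite_Iic n).prod (finite_setOf_eq_of_le_wlen ι a₀ n)).subset ?_
    rintro _ ⟨⟨k, B⟩, hp, rfl⟩
    have hk := h𝓕 _ hp
    exact ⟨hk, fun v hv => if_neg (by simp only at hk; omega)⟩

def IsForbidden (X : Set (Word ι → A)) (m : ℕ) (B : Word ι → A) : Prop :=
  ∀ x ∈ X, ¬ occursIn x m B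

theorem eq_shiftOf_isForbidden {X : Set (Word ι → A)} (hX : IsShiftSpace ι X) :
    X = shiftOf ι {p | IsForbidden X p.1 p.2} := by
  obtain ⟨𝓕, rfl⟩ := hX
  exact subset_antisymm (fun x hx p hp => hp x hx) fun x hx p hp => hx p fun y hy => hy p hp

def HasForbiddenSubBlocksAbove (X : Set (Word ι → A)) (n : ℕ) : Prop :=
  ∀ m, n < m → ∀ B, IsForbidden X m B →
    ∃ k < m, ∃ u : Word ι, wlen u + k ≤ m ∧ IsForbidden X k (shiftBy u.1 B)

theorem HasForbiddenSubBlocksAbove.exists_le (hι : ∀ s, ι (ι s) = s) {X : Set (Word ι → A)}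
    {n : ℕ} (hX : HasForbiddenSubBlocksAbove X n) {x : Word ι → A} (m : ℕ) :
    ∀ B, IsForbidden X m B → occursIn x m B →
      ∃ k ≤ n, ∃ B', IsForbidden X k B' ∧ occursIn x k B' := by
  induction m using Nat.strong_induction_on with
  | _ m ih =>
    intro B hB hBx
    by_cases hm : m ≤ n
    · exact ⟨m, hm, B, hB, hBx⟩
    · obtain ⟨k, hkm, u, hku, hsub⟩ := hX m (not_le.mp hm) B hB
      exact ih k hkm _ hsub (hBx.shiftBy hι u hku)

theorem HasForbiddenSubBlocksAbove.eq_shiftOf (hι : ∀ s, ι (ι s) = s) {X : Set (Word ι → A)}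
    (hX : IsShiftSpace ι X) {n : ℕ} (hsub : HasForbiddenSubBlocksAbove X n) :
    X = shiftOf ι {p | p.1 ≤ n ∧ IsForbidden X p.1 p.2} := by
  refine subset_antisymm (fun x hx p hp => hp.2 x hx) fun x hx => ?_
  rw [eq_shiftOf_isForbidden hX]
  rintro ⟨m, B⟩ hB hBx
  obtain ⟨k, hk, B', hB', hB'x⟩ := hsub.exists_le hι m B hB hBx
  exact hx (k, B') ⟨hk, hB'⟩ hB'x

end Blocks

theorem not_sft_has_minimal_forbidden_blocks_general {S A : Type*} [DecidableEq S]
    [Fintype S] [Fintype A]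
    (ι : S → S) (hι : ∀ s, ι (ι s) = s)
    (X : Set (Word ι → A)) (hX : IsShiftSpace ι X) (hnot : ¬ IsSFT ι X) :
    ∀ n : ℕ, ∃ m : ℕ, n < m ∧ ∃ B : Word ι → A,
      (∀ x ∈ X, ¬ occursIn x m B) ∧
      (∀ k : ℕ, k < m → ∀ u : Word ι, wlen u + k ≤ m →
        ∃ x ∈ X, occursIn x k (shiftBy u.1 B)) := by
  intro n
  by_contra hmin
  have hsub : HasForbiddenSubBlocksAbove X n := by
    intro m hm B hB
    by_contra h
    push Not at h
    exact hmin ⟨m, hm, B, hB, fun k hk u hku => by simpa [IsForbidden] using h k hk u hku⟩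
  rw [hsub.eq_shiftOf hι hX] at hnot
  exact hnot (isSFT_shiftOf_of_le fun p hp => hp.1)

/-- if a shift space `X` is not of finite type, then for every `n` there
is `m > n` and an `m`-block `B` that is forbidden (occurs in no element of `X`) while
every proper sub-block of `B` (the `k`-block of `B` at position `u`, with `k < m` and
`|u| + k ≤ m`) occurs in some element of `X`. -/
theorem not_sft_has_minimal_forbidden_blocks {S A : Type*} [DecidableEq S]
    [Fintype S] [Fintype A]
    (ι : S → S) (hι : ∀ s, ι (ι s) = s) (hιne : ∀ s, ι s ≠ s)
    (X : Set (Word ι → A)) (hX : IsShiftSpace ι X) (hnot : ¬ IsSFT ι X) :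
    ∀ n : ℕ, ∃ m : ℕ, n < m ∧ ∃ B : Word ι → A,
      (∀ x ∈ X, ¬ occursIn x m B) ∧
      (∀ k : ℕ, k < m → ∀ u : Word ι, wlen u + k ≤ m →
        ∃ x ∈ X, occursIn x k (shiftBy u.1 B)) :=
  not_sft_has_minimal_forbidden_blocks_general ι hι X hX hnot
end
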